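/- For a dilation on (0,∞) with Lebesgue measure and the IGLS norm with ν absolutely continuous, the operator norm satisfies the lower bound: for s > 2 and any ε ∈ (0, b-a), ||σ_s|| ≥ s^{1/(a+ε)} · c(ε) where c(ε) = (∫_a^{a+ε} |f|_p^Q dp)^{1/Q} / ||f||_Y > 0 for any fixed nonzero f with |f|_p continuous and positive on [a,b]. Consequently liminf_{s→∞} log||σ_s||/log s ≥ 1/(a+ε) for every ε > 0. -/

import Mathlib

open MeasureTheory Real Set Filter

open Topology

/-- The L^p norm over (0,∞) with Lebesgue measure. -/
noncomputable def lpNormIoi (p : ℝ) (f : ℝ → ℝ) : ℝ :=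
  (∫ t in Set.Ioi (0 : ℝ), |f t| ^ p) ^ (1 / p)

/-- The IGLS norm ||f||_Y = (∫_a^b |f|_p^Q dp)^{1/Q}, with ν = Lebesgue measure on [a,b]. -/
noncomputable def iglsNorm (a b Q : ℝ) (f : ℝ → ℝ) : ℝ :=
  (∫ p in Set.Icc a b, (lpNormIoi p f) ^ Q) ^ (1 / Q)

/-- The dilation operator σ_s[f](t) = f(t/s). -/
noncomputable def dilation (s : ℝ) (f : ℝ → ℝ) : ℝ → ℝ := fun t => f (t / s)

/-- The operator norm of the dilation σ_s on the IGLS space. -/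
noncomputable def dilOpNorm (a b Q s : ℝ) : ℝ :=
  sSup {x : ℝ | ∃ f : ℝ → ℝ, Measurable f ∧ iglsNorm a b Q f ≤ 1 ∧
    x = iglsNorm a b Q (dilation s f)}

lemma lp_nonneg (p : ℝ) (f : ℝ → ℝ) : 0 ≤ lpNormIoi p f :=
  Real.rpow_nonneg (integral_nonneg fun t => Real.rpow_nonneg (abs_nonneg _) p) _

lemma lp_dil (f : ℝ → ℝ) {s : ℝ} (hs : 0 < s) (p : ℝ) :
    lpNormIoi p (dilation s f) = s ^ (1 / p) * lpNormIoi p f := by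
  unfold lpNormIoi dilation
  have h1 : (∫ t in Ioi (0 : ℝ), |f (t / s)| ^ p) = s * ∫ t in Ioi (0 : ℝ), |f t| ^ p := by
    have h := integral_comp_mul_left_Ioi (fun x => |f x| ^ p) 0 (inv_pos.mpr hs)
    simp only [mul_zero, smul_eq_mul, inv_inv] at h
    rw [← h]
    congr 1
    ext t
    rw [div_eq_inv_mul]
  rw [h1, Real.mul_rpow hs.le (integral_nonneg fun t => Real.rpow_nonneg (abs_nonneg _) p)]

lemma lp_smul (f : ℝ → ℝ) {c : ℝ} (hc : 0 ≤ c) {p : ℝ} (hp : p ≠ 0) :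
    lpNormIoi p (fun t => c * f t) = c * lpNormIoi p f := by
  unfold lpNormIoi
  have h1 : ∀ t : ℝ, |c * f t| ^ p = c ^ p * |f t| ^ p := fun t => by
    rw [abs_mul, abs_of_nonneg hc, Real.mul_rpow hc (abs_nonneg _)]
  simp_rw [h1]
  rw [integral_const_mul, Real.mul_rpow (Real.rpow_nonneg hc p)
    (integral_nonneg fun t => Real.rpow_nonneg (abs_nonneg _) p),
    ← Real.rpow_mul hc, mul_one_div_cancel hp, Real.rpow_one]

lemma igls_smul (a b Q : ℝ) (ha : 1 ≤ a) (hQ : 1 ≤ Q) (f : ℝ → ℝ) {c : ℝ} (hc : 0 ≤ c) :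
    iglsNorm a b Q (fun t => c * f t) = c * iglsNorm a b Q f := by
  have hQ0 : Q ≠ 0 := by positivity
  unfold iglsNorm
  have h1 : ∫ p in Icc a b, lpNormIoi p (fun t => c * f t) ^ Q
      = ∫ p in Icc a b, c ^ Q * lpNormIoi p f ^ Q := by
    apply setIntegral_congr_fun measurableSet_Icc
    intro p hp
    have hp0 : p ≠ 0 := by
      have : (1:ℝ) ≤ p := le_trans ha hp.1
      positivity
    simp only
    rw [lp_smul f hc hp0, Real.mul_rpow hc (lp_nonneg _ _)]
  rw [h1, integral_const_mul, Real.mul_rpow (Real.rpow_nonneg hc Q)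
    (integral_nonneg fun p => Real.rpow_nonneg (lp_nonneg _ _) Q),
    ← Real.rpow_mul hc, mul_one_div_cancel hQ0, Real.rpow_one]

lemma igls_dil_eq (a b Q : ℝ) (ha : 1 ≤ a) (f : ℝ → ℝ) {s : ℝ} (hs : 0 < s) :
    iglsNorm a b Q (dilation s f) =
      (∫ p in Icc a b, s ^ ((1 / p) * Q) * lpNormIoi p f ^ Q) ^ (1 / Q) := by
  unfold iglsNorm
  congr 1
  apply setIntegral_congr_fun measurableSet_Icc
  intro p hp
  simp only
  rw [lp_dil f hs p, Real.mul_rpow (Real.rpow_nonneg hs.le _) (lp_nonneg _ _),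
    ← Real.rpow_mul hs.le]

lemma dil_bdd (a b Q : ℝ) (ha : 1 ≤ a) (hQ : 1 ≤ Q) {s : ℝ} (hs : 1 ≤ s) :
    ∀ x ∈ {x : ℝ | ∃ f : ℝ → ℝ, Measurable f ∧ iglsNorm a b Q f ≤ 1 ∧
      x = iglsNorm a b Q (dilation s f)}, x ≤ s ^ (1/a) := by
  have hs0 : (0:ℝ) < s := lt_of_lt_of_le one_pos hs
  have ha0 : (0:ℝ) < a := lt_of_lt_of_le one_pos ha
  have hQ0 : Q ≠ 0 := by positivity
  have hQ0' : (0:ℝ) < Q := lt_of_lt_of_le one_pos hQ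
  rintro x ⟨f, hmf, hle, rfl⟩
  rw [igls_dil_eq a b Q ha f hs0]
  set h : ℝ → ℝ := fun p => lpNormIoi p f ^ Q with hh
  have hnn : ∀ p, 0 ≤ h p := fun p => Real.rpow_nonneg (lp_nonneg _ _) _
  have hinn : ∀ p, 0 ≤ s ^ ((1/p) * Q) * h p :=
    fun p => mul_nonneg (Real.rpow_nonneg hs0.le _) (hnn p)
  by_cases hint : IntegrableOn (fun p => s ^ ((1/p) * Q) * h p) (Icc a b) volume
  · -- integrable case
    have hne : ∀ p : ℝ, s ^ ((1/p) * Q) ≠ 0 := fun p => (Real.rpow_pos_of_pos hs0 _).ne'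
    have heq : h = fun p => (s ^ ((1/p) * Q) * h p) * (s ^ ((1/p) * Q))⁻¹ := by
      funext p
      rw [mul_comm (s ^ ((1/p)*Q)) (h p), mul_assoc, mul_inv_cancel₀ (hne p), mul_one]
    have hmeas : AEStronglyMeasurable h (volume.restrict (Icc a b)) := by
      rw [heq]
      have hg : Measurable fun p : ℝ => (s ^ ((1/p) * Q))⁻¹ := by
        have he : ∀ p : ℝ, (s ^ ((1/p)*Q))⁻¹ = Real.exp (-(Real.log s * ((1/p) * Q))) := by
          intro p; rw [Real.rpow_def_of_pos hs0, ← Real.exp_neg]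
        simp_rw [he, one_div]
        exact (((measurable_id.inv.mul_const Q).const_mul (Real.log s)).neg).exp
      exact hint.aestronglyMeasurable.mul hg.aestronglyMeasurable
    have hhint : IntegrableOn h (Icc a b) volume := by
      apply MeasureTheory.Integrable.mono hint hmeas
      filter_upwards [ae_restrict_mem measurableSet_Icc] with p hp
      have hp0 : (0:ℝ) < p := lt_of_lt_of_le (lt_of_lt_of_le one_pos ha) hp.1
      have h1 : (1:ℝ) ≤ s ^ ((1/p) * Q) :=
        Real.one_le_rpow hs (by positivity)
      rw [Real.norm_eq_abs, Real.norm_eq_abs, abs_of_nonneg (hnn p), abs_of_nonneg (hinn p)]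
      exact le_mul_of_one_le_left (hnn p) h1
    have hstep : (∫ p in Icc a b, s ^ ((1/p) * Q) * h p)
        ≤ s ^ ((1/a) * Q) * ∫ p in Icc a b, h p := by
      rw [← integral_const_mul]
      apply setIntegral_mono_on hint (hhint.const_mul _) measurableSet_Icc
      intro p hp
      have hp0 : (0:ℝ) < p := lt_of_lt_of_le (lt_of_lt_of_le one_pos ha) hp.1
      apply mul_le_mul_of_nonneg_right _ (hnn p)
      apply Real.rpow_le_rpow_of_exponent_le hs
      exact mul_le_mul_of_nonneg_right (one_div_le_one_div_of_le ha0 hp.1) hQ0'.le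
    have hint_le : (∫ p in Icc a b, h p) ≤ 1 := by
      have h0 : 0 ≤ ∫ p in Icc a b, h p := integral_nonneg hnn
      have : (∫ p in Icc a b, h p) = ((∫ p in Icc a b, h p) ^ (1/Q) : ℝ) ^ Q := by
        rw [← Real.rpow_mul h0, one_div_mul_cancel hQ0, Real.rpow_one]
      rw [this]
      calc ((∫ p in Icc a b, h p) ^ (1/Q) : ℝ) ^ Q ≤ 1 ^ Q :=
            Real.rpow_le_rpow (Real.rpow_nonneg h0 _) hle hQ0'.le
        _ = 1 := Real.one_rpow Q
    calc (∫ p in Icc a b, s ^ ((1/p) * Q) * h p) ^ (1/Q)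
        ≤ (s ^ ((1/a) * Q) * 1) ^ (1/Q) := by
          apply Real.rpow_le_rpow (integral_nonneg hinn)
          · exact hstep.trans (by
              have := mul_le_mul_of_nonneg_left hint_le (Real.rpow_nonneg hs0.le ((1/a)*Q))
              linarith)
          · positivity
      _ = s ^ (1/a) := by
          rw [mul_one, ← Real.rpow_mul hs0.le, mul_assoc, mul_one_div_cancel hQ0, mul_one]
  · rw [integral_undef hint, Real.zero_rpow (by positivity)]
    positivity

theorem stmt7_aux (a b Q : ℝ) (ha : 1 ≤ a) (hab : a < b) (hQ : 1 ≤ Q)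
    (f : ℝ → ℝ) (hf : Measurable f)
    (hcont : ContinuousOn (fun p => lpNormIoi p f) (Set.Icc a b))
    (hpos : ∀ p ∈ Set.Icc a b, 0 < lpNormIoi p f)
    (hfin : 0 < iglsNorm a b Q f)
    (ε : ℝ) (hε : ε ∈ Set.Ioo 0 (b - a)) :
    (0 < (∫ p in Set.Icc a (a + ε), (lpNormIoi p f) ^ Q) ^ (1 / Q) / iglsNorm a b Q f) ∧
    (∀ s : ℝ, 2 < s →
      s ^ (1 / (a + ε)) *
        ((∫ p in Set.Icc a (a + ε), (lpNormIoi p f) ^ Q) ^ (1 / Q) / iglsNorm a b Q f)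
          ≤ sSup {x : ℝ | ∃ f : ℝ → ℝ, Measurable f ∧ iglsNorm a b Q f ≤ 1 ∧
              x = iglsNorm a b Q (dilation s f)}) ∧
    (1 / (a + ε) ≤
      Filter.liminf (fun s => Real.log (sSup {x : ℝ | ∃ f : ℝ → ℝ, Measurable f ∧
        iglsNorm a b Q f ≤ 1 ∧ x = iglsNorm a b Q (dilation s f)}) / Real.log s) atTop) := by
  have hQ0' : (0:ℝ) < Q := lt_of_lt_of_le one_pos hQ
  have hQ0 : Q ≠ 0 := hQ0'.ne'
  have ha0 : (0:ℝ) < a := lt_of_lt_of_le one_pos ha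
  have haε : a < a + ε := by linarith [hε.1]
  have haεb : a + ε < b := by have := hε.2; linarith
  have haε0 : (0:ℝ) < a + ε := by linarith
  have hsub : Icc a (a + ε) ⊆ Icc a b := Icc_subset_Icc_right haεb.le
  set h : ℝ → ℝ := fun p => lpNormIoi p f ^ Q with hh
  have hnn : ∀ p, 0 ≤ h p := fun p => Real.rpow_nonneg (lp_nonneg _ _) _
  have hcontQ : ContinuousOn h (Icc a b) :=
    hcont.rpow_const fun p hp => Or.inl (hpos p hp).ne'
  have hintb : IntegrableOn h (Icc a b) volume :=
    hcontQ.integrableOn_compact isCompact_Icc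
  have hintε : IntegrableOn h (Icc a (a + ε)) volume := hintb.mono_set hsub
  set Iε : ℝ := ∫ p in Icc a (a + ε), h p with hIεdef
  -- positivity of Iε
  have hIε : 0 < Iε := by
    obtain ⟨x₀, hx₀, hmin⟩ := isCompact_Icc.exists_isMinOn (nonempty_Icc.mpr haε.le)
      (hcontQ.mono hsub)
    have hm : 0 < h x₀ := Real.rpow_pos_of_pos (hpos x₀ (hsub hx₀)) _
    have hconst : (∫ _ in Icc a (a + ε), h x₀) = ε * h x₀ := by
      rw [setIntegral_const, measureReal_def, Real.volume_Icc, smul_eq_mul]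
      congr 1
      rw [ENNReal.toReal_ofReal (by linarith [hε.1])]
      ring
    have hle : (∫ _ in Icc a (a + ε), h x₀) ≤ Iε := by
      apply setIntegral_mono_on ((integrableOn_const_iff).mpr (Or.inr (by
        rw [Real.volume_Icc]; exact ENNReal.ofReal_lt_top))) hintε measurableSet_Icc
      intro p hp
      exact hmin hp
    have : 0 < ε * h x₀ := mul_pos hε.1 hm
    linarith [hconst ▸ hle]
  have hN : 0 < iglsNorm a b Q f := hfin
  have hc : 0 < Iε ^ (1/Q) / iglsNorm a b Q f :=
    div_pos (Real.rpow_pos_of_pos hIε _) hN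
  have hpart2 : ∀ s : ℝ, 2 < s →
      s ^ (1 / (a + ε)) * (Iε ^ (1 / Q) / iglsNorm a b Q f)
        ≤ sSup {x : ℝ | ∃ f : ℝ → ℝ, Measurable f ∧ iglsNorm a b Q f ≤ 1 ∧
            x = iglsNorm a b Q (dilation s f)} := by
    intro s hs2
    have hs1 : (1:ℝ) ≤ s := by linarith
    have hs0 : (0:ℝ) < s := by linarith
    set S := {x : ℝ | ∃ f : ℝ → ℝ, Measurable f ∧ iglsNorm a b Q f ≤ 1 ∧
      x = iglsNorm a b Q (dilation s f)} with hS
    set N := iglsNorm a b Q f with hNdef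
    set g : ℝ → ℝ := fun t => N⁻¹ * f t with hg
    have hgmem : iglsNorm a b Q (dilation s g) ∈ S := by
      refine ⟨g, hf.const_mul _, ?_, rfl⟩
      rw [hg, igls_smul a b Q ha hQ f (inv_nonneg.mpr hN.le), inv_mul_cancel₀ hN.ne']
    have hbdd : BddAbove S := ⟨s ^ (1/a), fun x hx => dil_bdd a b Q ha hQ hs1 x hx⟩
    have hmemle := le_csSup hbdd hgmem
    -- evaluate iglsNorm (dilation s g)
    have hdg : dilation s g = fun t => N⁻¹ * (dilation s f) t := rfl
    have hval : iglsNorm a b Q (dilation s g) = N⁻¹ * iglsNorm a b Q (dilation s f) := by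
      rw [hdg, igls_smul a b Q ha hQ _ (inv_nonneg.mpr hN.le)]
    -- key estimate
    have hkey : s ^ (1/(a+ε)) * Iε ^ (1/Q) ≤ iglsNorm a b Q (dilation s f) := by
      rw [igls_dil_eq a b Q ha f hs0]
      have hGcont : ContinuousOn (fun p => s ^ ((1/p) * Q) * h p) (Icc a b) := by
        have h1 : ContinuousOn (fun p : ℝ => (1/p) * Q) (Icc a b) :=
          (continuousOn_const.div continuousOn_id fun p hp =>
            (lt_of_lt_of_le ha0 hp.1).ne').mul continuousOn_const
        exact (continuousOn_const.rpow h1 fun p _ => Or.inl hs0.ne').mul hcontQ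
      have hJint : IntegrableOn (fun p => s ^ ((1/p) * Q) * h p) (Icc a b) volume :=
        hGcont.integrableOn_compact isCompact_Icc
      have hinn : ∀ p : ℝ, 0 ≤ s ^ ((1/p) * Q) * h p :=
        fun p => mul_nonneg (Real.rpow_nonneg hs0.le _) (hnn p)
      have step1 : (∫ p in Icc a (a+ε), s ^ ((1/p) * Q) * h p)
          ≤ ∫ p in Icc a b, s ^ ((1/p) * Q) * h p :=
        setIntegral_mono_set hJint (Eventually.of_forall hinn) (hsub.eventuallyLE)
      have step2 : s ^ ((1/(a+ε)) * Q) * Iε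
          ≤ ∫ p in Icc a (a+ε), s ^ ((1/p) * Q) * h p := by
        rw [hIεdef, ← integral_const_mul]
        apply setIntegral_mono_on (hintε.const_mul _) (hJint.mono_set hsub) measurableSet_Icc
        intro p hp
        have hp0 : (0:ℝ) < p := lt_of_lt_of_le ha0 hp.1
        apply mul_le_mul_of_nonneg_right _ (hnn p)
        apply Real.rpow_le_rpow_of_exponent_le hs1
        exact mul_le_mul_of_nonneg_right (one_div_le_one_div_of_le hp0 hp.2) hQ0'.le
      calc s ^ (1/(a+ε)) * Iε ^ (1/Q)
          = (s ^ ((1/(a+ε)) * Q) * Iε) ^ (1/Q) := by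
            rw [Real.mul_rpow (Real.rpow_nonneg hs0.le _) hIε.le, ← Real.rpow_mul hs0.le,
              mul_assoc, mul_one_div_cancel hQ0, mul_one]
        _ ≤ (∫ p in Icc a b, s ^ ((1/p) * Q) * h p) ^ (1/Q) :=
            Real.rpow_le_rpow (mul_nonneg (Real.rpow_nonneg hs0.le _) hIε.le)
              (step2.trans step1) (by positivity)
    calc s ^ (1/(a+ε)) * (Iε ^ (1/Q) / N)
        = (s ^ (1/(a+ε)) * Iε ^ (1/Q)) * N⁻¹ := by rw [div_eq_mul_inv]; ring
      _ ≤ iglsNorm a b Q (dilation s f) * N⁻¹ :=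
          mul_le_mul_of_nonneg_right hkey (inv_nonneg.mpr hN.le)
      _ = iglsNorm a b Q (dilation s g) := by rw [hval]; ring
      _ ≤ sSup S := hmemle
  refine ⟨hc, hpart2, ?_⟩
  -- part 3 : liminf
  set c : ℝ := Iε ^ (1/Q) / iglsNorm a b Q f with hcdef
  set u : ℝ → ℝ := fun s => Real.log (sSup {x : ℝ | ∃ f : ℝ → ℝ, Measurable f ∧
    iglsNorm a b Q f ≤ 1 ∧ x = iglsNorm a b Q (dilation s f)}) / Real.log s with hu
  set v : ℝ → ℝ := fun s => 1/(a+ε) + Real.log c / Real.log s with hv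
  have htend : Tendsto v atTop (𝓝 (1/(a+ε))) := by
    have h0 : Tendsto (fun s : ℝ => Real.log c / Real.log s) atTop (𝓝 0) := by
      have h1 := Real.tendsto_log_atTop.inv_tendsto_atTop
      simpa [div_eq_mul_inv] using h1.const_mul (Real.log c)
    have h1 : Tendsto (fun s : ℝ => 1/(a+ε) + Real.log c / Real.log s) atTop
        (𝓝 (1/(a+ε) + 0)) := tendsto_const_nhds.add h0
    rw [add_zero] at h1
    rw [hv]
    exact h1
  have hub : ∀ᶠ s in atTop, v s ≤ u s := by
    filter_upwards [eventually_gt_atTop (2:ℝ)] with s hs2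
    have hs0 : (0:ℝ) < s := by linarith
    have hlow := hpart2 s hs2
    have hsp : 0 < s ^ (1/(a+ε)) := Real.rpow_pos_of_pos hs0 _
    have hD0 : 0 < sSup {x : ℝ | ∃ f : ℝ → ℝ, Measurable f ∧ iglsNorm a b Q f ≤ 1 ∧
        x = iglsNorm a b Q (dilation s f)} := lt_of_lt_of_le (mul_pos hsp hc) hlow
    have hlogs : 0 < Real.log s := Real.log_pos (by linarith)
    have hlog : (1/(a+ε)) * Real.log s + Real.log c
        ≤ Real.log (sSup {x : ℝ | ∃ f : ℝ → ℝ, Measurable f ∧ iglsNorm a b Q f ≤ 1 ∧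
            x = iglsNorm a b Q (dilation s f)}) := by
      have := Real.log_le_log (mul_pos hsp hc) hlow
      rwa [Real.log_mul hsp.ne' hc.ne', Real.log_rpow hs0] at this
    calc v s = ((1/(a+ε)) * Real.log s + Real.log c) / Real.log s := by
          rw [hv]; field_simp
      _ ≤ u s := (div_le_div_iff_of_pos_right hlogs).mpr hlog
  have hbd : IsBoundedUnder (· ≥ ·) atTop v := htend.isBoundedUnder_ge
  have hcob : IsCoboundedUnder (· ≥ ·) atTop u := by
    apply isCoboundedUnder_ge_of_eventually_le atTop (x := 1/a)
    filter_upwards [eventually_gt_atTop (2:ℝ)] with s hs2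
    have hs0 : (0:ℝ) < s := by linarith
    have hs1 : (1:ℝ) ≤ s := by linarith
    have hlogs : 0 < Real.log s := Real.log_pos (by linarith)
    have hD0 : 0 < sSup {x : ℝ | ∃ f : ℝ → ℝ, Measurable f ∧ iglsNorm a b Q f ≤ 1 ∧
        x = iglsNorm a b Q (dilation s f)} :=
      lt_of_lt_of_le (mul_pos (Real.rpow_pos_of_pos hs0 _) hc) (hpart2 s hs2)
    have hsup : sSup {x : ℝ | ∃ f : ℝ → ℝ, Measurable f ∧ iglsNorm a b Q f ≤ 1 ∧
        x = iglsNorm a b Q (dilation s f)} ≤ s ^ (1/a) :=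
      Real.sSup_le (dil_bdd a b Q ha hQ hs1) (Real.rpow_nonneg hs0.le _)
    have hloglog : Real.log (sSup {x : ℝ | ∃ f : ℝ → ℝ, Measurable f ∧ iglsNorm a b Q f ≤ 1 ∧
        x = iglsNorm a b Q (dilation s f)}) ≤ (1/a) * Real.log s := by
      have := Real.log_le_log hD0 hsup
      rwa [Real.log_rpow hs0] at this
    calc u s ≤ ((1/a) * Real.log s) / Real.log s := (div_le_div_iff_of_pos_right hlogs).mpr hloglog
      _ = 1/a := by field_simp
  have := Filter.liminf_le_liminf hub hbd hcob
  rwa [htend.liminf_eq] at this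

/-- lower bound for the dilation operator norm.  For any fixed nonzero f
with p ↦ |f|_p continuous and positive on [a,b], and any ε ∈ (0, b-a), setting
c(ε) = (∫_a^{a+ε} |f|_p^Q dp)^{1/Q} / ||f||_Y > 0, one has ||σ_s|| ≥ s^{1/(a+ε)}·c(ε)
for all s > 2; consequently liminf_{s→∞} log||σ_s||/log s ≥ 1/(a+ε). -/
theorem stmt7 (a b Q : ℝ) (ha : 1 ≤ a) (hab : a < b) (hQ : 1 ≤ Q)
    (f : ℝ → ℝ) (hf : Measurable f)
    (hcont : ContinuousOn (fun p => lpNormIoi p f) (Set.Icc a b))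
    (hpos : ∀ p ∈ Set.Icc a b, 0 < lpNormIoi p f)
    (hfin : 0 < iglsNorm a b Q f)
    (ε : ℝ) (hε : ε ∈ Set.Ioo 0 (b - a)) :
    (0 < (∫ p in Set.Icc a (a + ε), (lpNormIoi p f) ^ Q) ^ (1 / Q) / iglsNorm a b Q f) ∧
    (∀ s : ℝ, 2 < s →
      s ^ (1 / (a + ε)) *
        ((∫ p in Set.Icc a (a + ε), (lpNormIoi p f) ^ Q) ^ (1 / Q) / iglsNorm a b Q f)
          ≤ dilOpNorm a b Q s) ∧
    (1 / (a + ε) ≤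
      Filter.liminf (fun s => Real.log (dilOpNorm a b Q s) / Real.log s) atTop) := by
  unfold dilOpNorm
  exact stmt7_aux a b Q ha hab hQ f hf hcont hpos hfin ε hε
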